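/- For a single-layer softmax model with parameters θ_1,...,θ_C and updated parameter θ'_c = θ_c + g (z - θ_c^T x) where z = ln Σ_j exp(θ_j^T x), the softmax probability of class c under the updated model equals p_c / (p_c + p_c^{x^T g}(1 - p_c)), where p_c = exp(θ_c^T x)/Σ_j exp(θ_j^T x). -/
import Mathlib


open Real Finset Matrix

/-- The genie probability: updating only the column of class c via
θ'_c = θ_c + (z - θ_c^T x) g with z = ln Σ_j exp(θ_j^T x), the softmax probability of
class c under the updated model equals p_c / (p_c + p_c^{x^T g} (1 - p_c)), where
p_c = exp(θ_c^T x)/Σ_j exp(θ_j^T x). -/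
theorem stmt_5 (M C : ℕ) (x g : Fin M → ℝ) (θ : Fin C → Fin M → ℝ) (c : Fin C)
    (z : ℝ) (hz : z = Real.log (∑ j, Real.exp (θ j ⬝ᵥ x)))
    (θc' : Fin M → ℝ) (hθc' : θc' = θ c + (z - θ c ⬝ᵥ x) • g)
    (pc : ℝ) (hpc : pc = Real.exp (θ c ⬝ᵥ x) / ∑ j, Real.exp (θ j ⬝ᵥ x)) :
    Real.exp (θc' ⬝ᵥ x) /
        ((∑ j ∈ Finset.univ.erase c, Real.exp (θ j ⬝ᵥ x)) + Real.exp (θc' ⬝ᵥ x)) =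
      pc / (pc + pc ^ (x ⬝ᵥ g) * (1 - pc)) := by
  set S : ℝ := ∑ j, Real.exp (θ j ⬝ᵥ x) with hS
  set a : ℝ := Real.exp (θ c ⬝ᵥ x) with ha
  have ha_pos : 0 < a := Real.exp_pos _
  have hS_pos : 0 < S := Finset.sum_pos (fun j _ => Real.exp_pos _) ⟨c, Finset.mem_univ c⟩
  have hpc_pos : 0 < pc := by rw [hpc]; positivity
  set t : ℝ := x ⬝ᵥ g with ht
  have hgx : g ⬝ᵥ x = t := dotProduct_comm g x
  have herase : (∑ j ∈ Finset.univ.erase c, Real.exp (θ j ⬝ᵥ x)) = S - a := by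
    rw [hS, Finset.sum_erase_eq_sub (Finset.mem_univ c)]
  have hlogpc : Real.log pc = θ c ⬝ᵥ x - z := by
    rw [hpc, hz, Real.log_div (ne_of_gt ha_pos) (ne_of_gt hS_pos), Real.log_exp]
  have hdot : θc' ⬝ᵥ x = θ c ⬝ᵥ x + (z - θ c ⬝ᵥ x) * t := by
    rw [hθc', add_dotProduct, smul_dotProduct, hgx, smul_eq_mul]
  set q : ℝ := pc ^ t with hq
  have hq_pos : 0 < q := Real.rpow_pos_of_pos hpc_pos t
  have hexp : Real.exp (θc' ⬝ᵥ x) = a / q := by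
    rw [hq, Real.rpow_def_of_pos hpc_pos, hlogpc, hdot, Real.exp_add]
    rw [show (z - θ c ⬝ᵥ x) * t = -((θ c ⬝ᵥ x - z) * t) by ring, Real.exp_neg, div_eq_mul_inv]
  have hpcS : pc * S = a := by rw [hpc]; field_simp
  have hSa : a ≤ S := by
    have h0 : 0 ≤ S - a := herase ▸ Finset.sum_nonneg fun j _ => (Real.exp_pos _).le
    linarith
  have hpc1 : pc ≤ 1 := by rw [hpc]; exact div_le_one_of_le₀ hSa hS_pos.le
  have hd1 : 0 < (S - a) + a / q :=
    add_pos_of_nonneg_of_pos (sub_nonneg.2 hSa) (div_pos ha_pos hq_pos)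
  have hd2 : 0 < pc + q * (1 - pc) :=
    add_pos_of_pos_of_nonneg hpc_pos (mul_nonneg hq_pos.le (by linarith))
  rw [hexp, herase]
  rw [div_eq_div_iff hd1.ne' hd2.ne']
  field_simp
  nlinarith [hpcS, hq_pos, hpc_pos]
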